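/- Combining perturbation and covariance: let σᵢᵏ (i=1..n, k=1..K, K ≥ 2) be i.i.d. with mean 0 and variance 1, H symmetric positive definite, gᵢ ∈ ℝᵈ, Δθᵏ = H⁻¹ (1/n) Σᵢ σᵢᵏ gᵢ, and I(xᵢ,xⱼ) = gᵢᵀ Ĉ gⱼ with Ĉ the empirical covariance of {Δθᵏ}. If H = (1/n) Σᵢ gᵢgᵢᵀ, then E[I(xᵢ,xⱼ)] = (1/n) gᵢᵀ H⁻¹ gⱼ. -/

import Mathlib

open scoped BigOperators
open MeasureTheory ProbabilityTheory Matrix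

/-!
Each `gᵢ ⬝ Δθᵏ` is the linear form `Σₗ σₗᵏ aₗ` with `aₗ = n⁻¹ gᵢᵀ H⁻¹ gₗ`, and the `σₗᵏ` are
orthonormal in `L²`, so `E[(gᵢ ⬝ Δθᵏ)(Δθᵏ' ⬝ gⱼ)] = δₖₖ' s` with `s = Σₗ aₗ bₗ`. In the empirical
covariance only diagonal terms survive, giving `(K s - K⁻¹ K s)/(K - 1) = s`. Finally, since
`H⁻¹` is symmetric and `Σₗ gₗgₗᵀ = n H`, `s = n⁻² gᵢᵀ H⁻¹ (n H) H⁻¹ gⱼ = n⁻¹ gᵢᵀ H⁻¹ gⱼ`.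
-/

open Finset

section Expectation

variable {Ω : Type*} [MeasurableSpace Ω] {μ : Measure Ω}

lemma integral_mul_eq_ite_of_iIndepFun {ι : Type*} [DecidableEq ι] {ξ : ι → Ω → ℝ}
    (hindep : iIndepFun ξ μ) (hL2 : ∀ p, MemLp (ξ p) 2 μ) (hmean : ∀ p, ∫ ω, ξ p ω ∂μ = 0)
    (hvar : ∀ p, ∫ ω, ξ p ω ^ 2 ∂μ = 1) (p q : ι) :
    ∫ ω, ξ p ω * ξ q ω ∂μ = if p = q then 1 else 0 := by
  split_ifs with hpq
  · subst hpq
    simpa [sq] using hvar p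
  · rw [(hindep.indepFun hpq).integral_fun_mul_eq_mul_integral (hL2 p).aestronglyMeasurable
      (hL2 q).aestronglyMeasurable, hmean, zero_mul]

lemma integral_sum_mul_sum {ι κ : Type*} (s : Finset ι) (t : Finset κ) {X : ι → Ω → ℝ}
    {Y : κ → Ω → ℝ} (hXY : ∀ p ∈ s, ∀ q ∈ t, Integrable (fun ω => X p ω * Y q ω) μ) :
    ∫ ω, (∑ p ∈ s, X p ω) * (∑ q ∈ t, Y q ω) ∂μ = ∑ p ∈ s, ∑ q ∈ t, ∫ ω, X p ω * Y q ω ∂μ := by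
  simp_rw [sum_mul_sum]
  rw [integral_finsetSum _ fun p hp => integrable_finsetSum _ (hXY p hp)]
  exact sum_congr rfl fun p hp => integral_finsetSum _ (hXY p hp)

lemma integral_sum_mul_sum_of_orthonormal {ι κ : Type*} [Fintype ι] [DecidableEq ι]
    [DecidableEq κ] {σ : ι → κ → Ω → ℝ} (hL2 : ∀ l k, MemLp (σ l k) 2 μ)
    (hortho : ∀ l k m k', ∫ ω, σ l k ω * σ m k' ω ∂μ = if (l, k) = (m, k') then 1 else 0)
    (a b : ι → ℝ) (k k' : κ) :
    ∫ ω, (∑ l, σ l k ω * a l) * (∑ m, σ m k' ω * b m) ∂μ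
      = if k = k' then ∑ l, a l * b l else 0 := by
  rw [integral_sum_mul_sum _ _ fun l _ m _ =>
    ((hL2 l k).mul_const (a l)).integrable_mul ((hL2 m k').mul_const (b m))]
  have hterm : ∀ l m, ∫ ω, σ l k ω * a l * (σ m k' ω * b m) ∂μ
      = a l * b m * if (l, k) = (m, k') then 1 else 0 := fun l m => by
    rw [← hortho, ← integral_const_mul]
    congr 1 with ω
    ring
  simp_rw [hterm]
  by_cases hk : k = k' <;> simp [hk, Prod.ext_iff]

lemma integral_empiricalCov {κ : Type*} [Fintype κ] [DecidableEq κ]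
    (hκ : 1 < Fintype.card κ) {X Y : κ → Ω → ℝ}
    (hint : ∀ k k', Integrable (fun ω => X k ω * Y k' ω) μ) {s : ℝ}
    (hcross : ∀ k k', ∫ ω, X k ω * Y k' ω ∂μ = if k = k' then s else 0) :
    ∫ ω, ((Fintype.card κ : ℝ) - 1)⁻¹ * (∑ k, X k ω * Y k ω
      - (Fintype.card κ : ℝ)⁻¹ * ((∑ k, X k ω) * ∑ k, Y k ω)) ∂μ = s := by
  have hK : (Fintype.card κ : ℝ) - 1 ≠ 0 := sub_ne_zero.mpr (by exact_mod_cast hκ.ne')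
  have hprod : Integrable (fun ω => (∑ k, X k ω) * ∑ k, Y k ω) μ := by
    simp_rw [sum_mul_sum]
    exact integrable_finsetSum _ fun k _ => integrable_finsetSum _ fun k' _ => hint k k'
  rw [integral_const_mul, integral_sub (integrable_finsetSum _ fun k _ => hint k k)
    (hprod.const_mul _), integral_const_mul, integral_sum_mul_sum _ _ fun k _ k' _ => hint k k',
    integral_finsetSum _ fun k _ => hint k k]
  simp only [hcross, if_true, sum_ite_eq, mem_univ, sum_const, card_univ, nsmul_eq_mul]
  field_simp

end Expectation

section Bilinear

variable {R m : Type*} [CommRing R] [Fintype m]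

lemma dotProduct_vecMulVec_mulVec (u x y v : m → R) :
    u ⬝ᵥ vecMulVec x y *ᵥ v = (u ⬝ᵥ x) * (y ⬝ᵥ v) := by
  rw [vecMulVec_mulVec, op_smul_eq_smul, dotProduct_smul, smul_eq_mul, mul_comm]

lemma dotProduct_empiricalCov_mulVec {κ : Type*} [Fintype κ] (u v : m → R) (x : κ → m → R)
    (c c' : R) :
    u ⬝ᵥ (c • (∑ k, vecMulVec (x k) (x k) - c' • vecMulVec (∑ k, x k) (∑ k, x k))) *ᵥ v
      = c * (∑ k, (u ⬝ᵥ x k) * (x k ⬝ᵥ v) - c' * ((∑ k, u ⬝ᵥ x k) * ∑ k, x k ⬝ᵥ v)) := by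
  simp only [smul_mulVec, sub_mulVec, sum_mulVec, dotProduct_smul, dotProduct_sub,
    dotProduct_sum, dotProduct_vecMulVec_mulVec, sum_dotProduct, smul_eq_mul]

lemma dotProduct_mulVec_smul_sum_smul {ι : Type*} [Fintype ι] (u : m → R) (M : Matrix m m R)
    (c : R) (s : ι → R) (g : ι → m → R) :
    u ⬝ᵥ M *ᵥ (c • ∑ l, s l • g l) = ∑ l, s l * (c * (u ⬝ᵥ M *ᵥ g l)) := by
  simp only [mulVec_smul, mulVec_sum, dotProduct_smul, dotProduct_sum, smul_eq_mul, mul_sum]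
  exact sum_congr rfl fun l _ => by ring

lemma sum_dotProduct_mulVec_mul_dotProduct_mulVec {ι : Type*} [Fintype ι] (A : Matrix m m R)
    (u v : m → R) (g : ι → m → R) :
    ∑ l, (u ⬝ᵥ A *ᵥ g l) * (v ⬝ᵥ A *ᵥ g l)
      = u ⬝ᵥ (A * (∑ l, vecMulVec (g l) (g l)) * Aᵀ) *ᵥ v := by
  simp only [mul_sum, sum_mul, sum_mulVec, dotProduct_sum, mul_vecMulVec, vecMulVec_mul,
    vecMul_transpose, dotProduct_vecMulVec_mulVec]
  exact sum_congr rfl fun l _ => by rw [dotProduct_comm v]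

end Bilinear

lemma sum_mul_dotProduct_inv_mulVec {𝕜 m ι : Type*} [Field 𝕜] [Fintype m] [DecidableEq m]
    [Fintype ι] {c : 𝕜} (hc : c ≠ 0) (g : ι → m → 𝕜) {H : Matrix m m 𝕜}
    (hH : H = c • ∑ l, vecMulVec (g l) (g l)) (hdet : IsUnit H.det) (u v : m → 𝕜) :
    ∑ l, (c * (u ⬝ᵥ H⁻¹ *ᵥ g l)) * (c * (v ⬝ᵥ H⁻¹ *ᵥ g l)) = c * (u ⬝ᵥ H⁻¹ *ᵥ v) := by
  have hsymm : Hᵀ = H := by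
    simp [hH, transpose_sum, transpose_vecMulVec]
  have hG : ∑ l, vecMulVec (g l) (g l) = c⁻¹ • H := by
    rw [hH, smul_smul, inv_mul_cancel₀ hc, one_smul]
  simp_rw [mul_mul_mul_comm c, ← mul_sum]
  rw [sum_dotProduct_mulVec_mul_dotProduct_mulVec, hG, transpose_nonsing_inv, hsymm,
    mul_smul_comm, smul_mul_assoc, mul_nonsing_inv_cancel_right _ _ hdet, smul_mulVec,
    dotProduct_smul, smul_eq_mul]
  field_simp

theorem stmt_13_general {Ω : Type*} [MeasureSpace Ω] [IsProbabilityMeasure (ℙ : Measure Ω)]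
    {d n K : ℕ} (hK : 2 ≤ K) (σ : Fin n → Fin K → Ω → ℝ)
    (hindep : iIndepFun
      (fun (p : Fin n × Fin K) ω => σ p.1 p.2 ω) ℙ)
    (hL2 : ∀ i k, MemLp (σ i k) 2 ℙ)
    (hmean : ∀ i k, ∫ ω, σ i k ω = 0)
    (hvar : ∀ i k, ∫ ω, (σ i k ω)^2 = 1)
    (g : Fin n → Fin d → ℝ)
    (H : Matrix (Fin d) (Fin d) ℝ)
    (hH : H = ((n:ℝ))⁻¹ • ∑ i, vecMulVec (g i) (g i))
    (hHinv : IsUnit H.det)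
    (Δθ : Fin K → Ω → Fin d → ℝ)
    (hΔθ : ∀ k ω, Δθ k ω = H⁻¹.mulVec (((n:ℝ))⁻¹ • ∑ i, σ i k ω • g i))
    (Chat : Ω → Matrix (Fin d) (Fin d) ℝ)
    (hChat : ∀ ω, Chat ω = ((K:ℝ) - 1)⁻¹ •
      (∑ k, vecMulVec (Δθ k ω) (Δθ k ω)
        - ((K:ℝ))⁻¹ • vecMulVec (∑ k, Δθ k ω) (∑ k, Δθ k ω)))
    (i j : Fin n) :
    (∫ ω, g i ⬝ᵥ (Chat ω).mulVec (g j))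
      = ((n:ℝ))⁻¹ * (g i ⬝ᵥ H⁻¹.mulVec (g j)) := by
  set a : Fin n → ℝ := fun l => (n : ℝ)⁻¹ * (g i ⬝ᵥ H⁻¹ *ᵥ g l)
  set b : Fin n → ℝ := fun l => (n : ℝ)⁻¹ * (g j ⬝ᵥ H⁻¹ *ᵥ g l)
  have hX : ∀ k ω, g i ⬝ᵥ Δθ k ω = ∑ l, σ l k ω * a l := fun k ω => by
    rw [hΔθ, dotProduct_mulVec_smul_sum_smul]
  have hY : ∀ k ω, Δθ k ω ⬝ᵥ g j = ∑ l, σ l k ω * b l := fun k ω => by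
    rw [dotProduct_comm, hΔθ, dotProduct_mulVec_smul_sum_smul]
  have hortho := integral_mul_eq_ite_of_iIndepFun hindep (fun p => hL2 p.1 p.2)
    (fun p => hmean p.1 p.2) (fun p => hvar p.1 p.2)
  have hcross := integral_sum_mul_sum_of_orthonormal hL2
    (fun l k m k' => hortho (l, k) (m, k')) a b
  have hint : ∀ k k', Integrable (fun ω => (g i ⬝ᵥ Δθ k ω) * (Δθ k' ω ⬝ᵥ g j)) ℙ := by
    intro k k'
    simp_rw [hX, hY]
    exact (memLp_finsetSum _ fun l _ => (hL2 l k).mul_const (a l)).integrable_mul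
      (memLp_finsetSum _ fun l _ => (hL2 l k').mul_const (b l))
  have hunbiased := integral_empiricalCov (μ := ℙ) (κ := Fin K)
    (X := fun k ω => g i ⬝ᵥ Δθ k ω) (Y := fun k ω => Δθ k ω ⬝ᵥ g j)
    (by rwa [Fintype.card_fin]) hint (by simpa only [hX, hY] using hcross)
  rw [Fintype.card_fin] at hunbiased
  simp_rw [hChat, dotProduct_empiricalCov_mulVec, hunbiased]
  exact sum_mul_dotProduct_inv_mulVec (inv_ne_zero (Nat.cast_ne_zero.mpr i.pos.ne')) g hH hHinv
    _ _

/-- Theorem 1 (unbiasedness of the DAUNCE estimator, exact linear case).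
With σᵢᵏ i.i.d. zero-mean unit-variance, H = (1/n)Σᵢgᵢgᵢᵀ invertible,
Δθᵏ = H⁻¹ (1/n) Σᵢ σᵢᵏ gᵢ, Ĉ the empirical covariance of the Δθᵏ (K ≥ 2), and
I(xᵢ,xⱼ) = gᵢᵀ Ĉ gⱼ, we have E[I(xᵢ,xⱼ)] = (1/n) gᵢᵀ H⁻¹ gⱼ. -/
theorem stmt_13 {Ω : Type*} [MeasureSpace Ω] [IsProbabilityMeasure (ℙ : Measure Ω)]
    {d n K : ℕ} (hK : 2 ≤ K) (σ : Fin n → Fin K → Ω → ℝ)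
    (hmeas : ∀ i k, Measurable (σ i k))
    (hindep : iIndepFun
      (fun (p : Fin n × Fin K) ω => σ p.1 p.2 ω) ℙ)
    (hident : ∀ i k i' k', IdentDistrib (σ i k) (σ i' k') ℙ ℙ)
    (hL2 : ∀ i k, MemLp (σ i k) 2 ℙ)
    (hmean : ∀ i k, ∫ ω, σ i k ω = 0)
    (hvar : ∀ i k, ∫ ω, (σ i k ω)^2 = 1)
    (g : Fin n → Fin d → ℝ)
    (H : Matrix (Fin d) (Fin d) ℝ)
    (hH : H = ((n:ℝ))⁻¹ • ∑ i, vecMulVec (g i) (g i))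
    (hHinv : IsUnit H.det)
    (Δθ : Fin K → Ω → Fin d → ℝ)
    (hΔθ : ∀ k ω, Δθ k ω = H⁻¹.mulVec (((n:ℝ))⁻¹ • ∑ i, σ i k ω • g i))
    (Chat : Ω → Matrix (Fin d) (Fin d) ℝ)
    (hChat : ∀ ω, Chat ω = ((K:ℝ) - 1)⁻¹ •
      (∑ k, vecMulVec (Δθ k ω) (Δθ k ω)
        - ((K:ℝ))⁻¹ • vecMulVec (∑ k, Δθ k ω) (∑ k, Δθ k ω)))
    (i j : Fin n) :
    (∫ ω, g i ⬝ᵥ (Chat ω).mulVec (g j))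
      = ((n:ℝ))⁻¹ * (g i ⬝ᵥ H⁻¹.mulVec (g j)) :=
  stmt_13_general hK σ hindep hL2 hmean hvar g H hH hHinv Δθ hΔθ Chat hChat i j
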